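/- Let X and Y be compact metric spaces, R ⊆ X³ and S ⊆ Y³ closed subsets. Let X̃ = I_d(X,X) with isolated points ã_n and Ỹ = I_e(Y,Y) with isolated points b̃_n (for admissible sequences d, e), and set B_n = {ã_n} × X̃², C_n = X̃ × {ã_n} × X̃, D_n = X̃² × {ã_n}, and H_m = {b̃_m} × Ỹ², I_m = Ỹ × {b̃_m} × Ỹ, J_m = Ỹ² × {b̃_m}. Identify R with its copy in X̃³ (via x ↦ (x,0) in each coordinate), and likewise S in Ỹ³. Then the following are equivalent: (i) there is a homeomorphism f : X → Y with (f×f×f)(R) = S; (ii) there exist a homeomorphism h : X̃³ → Ỹ³ and a permutation τ of the positive integers such that h(R) = S and, for all n, h(B_n) = H_{τ(n)}, h(C_n) = I_{τ(n)}, h(D_n) = J_{τ(n)}. -/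

import Mathlib

/-!
Everything rests on two facts about `Itilde d`: the isolated points `atilde d n` are dense, and
`atilde d n` tends to `embI d x` along a filter exactly when `n → ∞` and `d n → x`.

(i) → (ii). Every point is a cluster point of `d` and of `e`, so there are injections pairing each
`n` with an index `m` such that `e m` is close to `f (d n)`, and each `m` with an `n` such that
`d n` is close to `f⁻¹ (e m)`. Schröder–Bernstein merges them into a permutation `τ` keeping one of
the two closeness relations, and uniform continuity of `f` on the compact space turns either into
`dist (f (d n)) (e (τ n)) → 0`. Then `embI x ↦ embI (f x)`, `atilde n ↦ atilde (τ n)` is a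
homeomorphism `Itilde d ≃ₜ Itilde e`, and `h` is its cube.

(ii) → (i). On `{p | p.1 = atilde d n}` the first coordinate of `h` is constant. As the isolated
points are dense, the first coordinate of `h p` depends only on `p.1`, and likewise for the other
coordinates, with the same function `φ` each time; so `h = φ × φ × φ` and `φ` is a homeomorphism.
It permutes the isolated points, hence restricts to a homeomorphism `X ≃ₜ Y`, which carries `R` to
`S` because `h` does.
-/

open Set Topology

/-- The space `I_d(X,A) ⊆ X × [0,1]`: the copy `X × {0}` of `X` together with the isolated
points `ã_n = (d_n, 1/n)` (here indexed by `n : ℕ`, with `ã_n = (d n, 1/(n+1))`). -/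
def Itilde {X : Type*} [TopologicalSpace X] (d : ℕ → X) : Set (X × ℝ) :=
  (Set.univ ×ˢ {(0 : ℝ)}) ∪ Set.range (fun n : ℕ => (d n, 1 / (n + 1 : ℝ)))

/-- A sequence `d` is admissible for `A` if it takes values in `A`, has dense range in `A`,
and attains each of its values at infinitely many indices. -/
def Admissible {X : Type*} [TopologicalSpace X] (A : Set X) (d : ℕ → X) : Prop :=
  (∀ n, d n ∈ A) ∧ A ⊆ closure (Set.range d) ∧ ∀ n, {m : ℕ | d m = d n}.Infinite

/-- The isolated point `ã_n ∈ I_d(X,A)`. -/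
noncomputable def atilde {X : Type*} [TopologicalSpace X] (d : ℕ → X) (n : ℕ) : ↥(Itilde d) :=
  ⟨(d n, 1 / (n + 1 : ℝ)), Or.inr ⟨n, rfl⟩⟩

/-- The canonical copy of `X` inside `I_d(X,A)`, `x ↦ (x,0)`. -/
def embI {X : Type*} [TopologicalSpace X] (d : ℕ → X) (x : X) : ↥(Itilde d) :=
  ⟨(x, 0), Or.inl (Set.mk_mem_prod (Set.mem_univ x) rfl)⟩

open Filter Function Uniformity

theorem tendsto_one_div_add_one_nhds_zero_iff {L : Filter ℕ} :
    Tendsto (fun n : ℕ => (1 : ℝ) / (n + 1)) L (𝓝 0) ↔ L ≤ atTop := by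
  refine ⟨fun h => ?_, tendsto_one_div_add_atTop_nhds_zero_nat.mono_left⟩
  rw [← tendsto_id', tendsto_atTop]
  intro N
  filter_upwards [h.eventually (gt_mem_nhds (Nat.one_div_pos_of_nat (n := N)))] with n hn
  rw [one_div_lt_one_div (by positivity) (by positivity)] at hn
  exact_mod_cast (by linarith : (N : ℝ) ≤ n)

theorem Admissible.mapClusterPt {X : Type*} [TopologicalSpace X] {A : Set X} {d : ℕ → X}
    (hd : Admissible A d) {x : X} (hx : x ∈ A) : MapClusterPt x atTop d := by
  rw [mapClusterPt_iff_frequently]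
  intro s hs
  obtain ⟨_, hms, m, rfl⟩ := mem_closure_iff_nhds.mp (hd.2.1 hx) s hs
  exact (Nat.frequently_atTop_iff_infinite.mpr (hd.2.2 m)).mono fun n hn => hn ▸ hms

theorem UniformEquiv.tendsto_uniformity_symm_perm {X Y : Type*} [UniformSpace X]
    [UniformSpace Y] {d : ℕ → X} {e : ℕ → Y} (f : X ≃ᵤ Y) (τ : Equiv.Perm ℕ)
    (hfτ : Tendsto (fun n => (f (d n), e (τ n))) atTop (𝓤 Y)) :
    Tendsto (fun m => (f.symm (e m), d (τ.symm m))) atTop (𝓤 X) := by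
  have h := ((Tendsto.comp f.uniformContinuous_symm hfτ).uniformity_symm).comp
    τ.symm.injective.nat_tendsto_atTop
  simpa [comp_def] using h

theorem exists_perm_tendsto_uniformity {X Y : Type*} [PseudoMetricSpace X] [PseudoMetricSpace Y]
    {d : ℕ → X} {e : ℕ → Y} (hd : ∀ x, MapClusterPt x atTop d) (he : ∀ y, MapClusterPt y atTop e)
    (f : X ≃ᵤ Y) : ∃ τ : Equiv.Perm ℕ, Tendsto (fun n => (f (d n), e (τ n))) atTop (𝓤 Y) := by
  have hpos (n : ℕ) : (0 : ℝ) < 1 / (n + 1) := Nat.one_div_pos_of_nat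
  obtain ⟨u, hu_mono, hu⟩ := extraction_forall_of_frequently fun n =>
    (he (f (d n))).frequently (Metric.ball_mem_nhds _ (hpos n))
  obtain ⟨v, hv_mono, hv⟩ := extraction_forall_of_frequently fun m =>
    (hd (f.symm (e m))).frequently (Metric.ball_mem_nhds _ (hpos m))
  obtain ⟨τ, hτ_bij, hτ⟩ := Embedding.schroeder_bernstein_of_rel hu_mono.injective
    hv_mono.injective
    (fun n m => dist (e m) (f (d n)) < 1 / (n + 1) ∨ dist (d n) (f.symm (e m)) < 1 / (m + 1))
    (fun n => .inl (hu n)) (fun m => .inr (hv m))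
  refine ⟨Equiv.ofBijective τ hτ_bij, Metric.uniformity_basis_dist.tendsto_right_iff.mpr ?_⟩
  intro ε hε
  obtain ⟨δ, hδ, hfδ⟩ := Metric.uniformContinuous_iff.mp f.uniformContinuous ε hε
  have h₁ : ∀ᶠ n : ℕ in atTop, (1 : ℝ) / (n + 1) < ε :=
    tendsto_one_div_add_atTop_nhds_zero_nat.eventually (gt_mem_nhds hε)
  have h₂ : ∀ᶠ n : ℕ in atTop, (1 : ℝ) / (τ n + 1) < δ :=
    (tendsto_one_div_add_atTop_nhds_zero_nat.comp hτ_bij.injective.nat_tendsto_atTop).eventually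
      (gt_mem_nhds hδ)
  filter_upwards [h₁, h₂] with n h₁ h₂
  rcases hτ n with h | h
  · rw [dist_comm]
    exact h.trans h₁
  · simpa using hfδ (h.trans h₂)

section Cube

variable {A B : Type*} [TopologicalSpace A] [TopologicalSpace B]

theorem eq_diag_prod_of_mapsTo_fibers [T2Space B] {ι : Type*} {a : ι → A} (ha : DenseRange a)
    {b : ι → B} {h : A × A × A → B × B × B} (hh : Continuous h)
    (h₁ : ∀ n p, p.1 = a n → (h p).1 = b n) (h₂ : ∀ n p, p.2.1 = a n → (h p).2.1 = b n)
    (h₃ : ∀ n p, p.2.2 = a n → (h p).2.2 = b n) (p : A × A × A) :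
    h p = ((h (p.1, p.1, p.1)).1, (h (p.2.1, p.2.1, p.2.1)).1, (h (p.2.2, p.2.2, p.2.2)).1) := by
  obtain ⟨z₁, z₂, z₃⟩ := p
  have hdiag (n) : (h (a n, a n, a n)).1 = b n := h₁ n _ rfl
  have e₁ : (fun z => (h (z, z₂, z₃)).1) = fun z => (h (z, z, z)).1 :=
    ha.equalizer (by fun_prop) (by fun_prop) (funext fun n => (h₁ n _ rfl).trans (hdiag n).symm)
  have e₂ : (fun z => (h (z₁, z, z₃)).2.1) = fun z => (h (z, z, z)).1 :=
    ha.equalizer (by fun_prop) (by fun_prop) (funext fun n => (h₂ n _ rfl).trans (hdiag n).symm)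
  have e₃ : (fun z => (h (z₁, z₂, z)).2.2) = fun z => (h (z, z, z)).1 :=
    ha.equalizer (by fun_prop) (by fun_prop) (funext fun n => (h₃ n _ rfl).trans (hdiag n).symm)
  exact Prod.ext (congrFun e₁ z₁) (Prod.ext (congrFun e₂ z₂) (congrFun e₃ z₃))

@[simps apply]
def Homeomorph.ofCube (h : A × A × A ≃ₜ B × B × B) (φ : A → B)
    (hφ : ∀ p, h p = (φ p.1, φ p.2.1, φ p.2.2)) : A ≃ₜ B where
  toFun := φ
  invFun b := (h.symm (b, b, b)).1
  left_inv a := by simp [← hφ (a, a, a)]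
  right_inv b := by simpa using congrArg Prod.fst (hφ (h.symm (b, b, b))).symm
  continuous_toFun := by
    refine (continuous_fst.comp (h.continuous.comp (continuous_id.prodMk
      (continuous_id.prodMk continuous_id)))).congr fun a => ?_
    simp [hφ]
  continuous_invFun := by fun_prop

theorem Homeomorph.image_prodCongr_cube_fibers (φ : A ≃ₜ B) (a : A) :
    φ.prodCongr (φ.prodCongr φ) '' {p | p.1 = a} = {q | q.1 = φ a} ∧
    φ.prodCongr (φ.prodCongr φ) '' {p | p.2.1 = a} = {q | q.2.1 = φ a} ∧
    φ.prodCongr (φ.prodCongr φ) '' {p | p.2.2 = a} = {q | q.2.2 = φ a} := by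
  simp only [Homeomorph.image_eq_preimage_symm]
  refine ⟨?_, ?_, ?_⟩ <;> ext <;> simp [φ.symm_apply_eq]

end Cube

theorem image_image_eq_image_iff {α β γ δ : Type*} {g : β → δ} {i : α → β} {j : γ → δ}
    {f : α → γ} (hj : Injective j) (h : g ∘ i = j ∘ f) {R : Set α} {S : Set γ} :
    g '' (i '' R) = j '' S ↔ f '' R = S := by
  rw [← image_comp, h, image_comp, hj.image_injective.eq_iff]

namespace Itilde

section Topological

variable {X : Type*} [TopologicalSpace X] {d : ℕ → X}

theorem embI_injective : Injective (embI d) := fun _ _ h => congrArg (fun p => p.1.1) h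

theorem atilde_injective : Injective (atilde d) := by
  intro m n h
  have : (1 : ℝ) / (m + 1) = 1 / (n + 1) := congrArg (fun p => p.1.2) h
  simpa using this

theorem embI_ne_atilde (x : X) (n : ℕ) : embI d x ≠ atilde d n := by
  intro h
  have : (0 : ℝ) = 1 / (n + 1) := congrArg (fun p => p.1.2) h
  have : (0 : ℝ) < 1 / (n + 1) := by positivity
  linarith

theorem induction {P : Itilde d → Prop} (embI : ∀ x, P (embI d x)) (atilde : ∀ n, P (atilde d n))
    (p : Itilde d) : P p := by
  obtain ⟨⟨x, t⟩, ⟨-, ht⟩ | ⟨n, hn⟩⟩ := p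
  · obtain rfl : t = 0 := ht
    exact embI x
  · convert atilde n
    exact Subtype.ext hn.symm

theorem range_embI : range (embI d) = (range (atilde d))ᶜ := by
  ext p
  induction p using Itilde.induction with
  | embI x => simpa using fun n => (embI_ne_atilde x n).symm
  | atilde n => simpa using fun x => embI_ne_atilde x n

theorem isEmbedding_embI : IsEmbedding (embI d) :=
  (isEmbedding_prodMkLeft (0 : ℝ)).codRestrict (Itilde d) fun x => Or.inl ⟨mem_univ x, rfl⟩

theorem tendsto_atilde_nhds_embI_iff {L : Filter ℕ} {x : X} :
    Tendsto (atilde d) L (𝓝 (embI d x)) ↔ Tendsto d L (𝓝 x) ∧ L ≤ atTop := by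
  rw [tendsto_subtype_rng, ← tendsto_one_div_add_one_nhds_zero_iff]
  exact nhds_prod_eq (x := x) (y := (0 : ℝ)) ▸ tendsto_prod_iff'

theorem denseRange_atilde (hd : ∀ x, MapClusterPt x atTop d) : DenseRange (atilde d) := by
  intro p
  induction p using Itilde.induction with
  | atilde n => exact subset_closure (mem_range_self n)
  | embI x =>
    have : (comap d (𝓝 x) ⊓ atTop).NeBot := neBot_inf_comap_iff_map'.mpr (hd x)
    exact mem_closure_of_tendsto
      (tendsto_atilde_nhds_embI_iff.mpr ⟨tendsto_comap.mono_left inf_le_left, inf_le_right⟩)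
      (Eventually.of_forall mem_range_self)

theorem isOpen_singleton_atilde [T1Space X] (n : ℕ) : IsOpen {atilde d n} := by
  let s : Set (Itilde d) := {p | (1 : ℝ) / (n + 2) < p.1.2}
  refine isOpen_singleton_of_finite_mem_nhds _ (s := s) ?_ ?_
  · refine (isOpen_lt continuous_const (by fun_prop)).mem_nhds ?_
    show (1 : ℝ) / (n + 2) < 1 / (n + 1)
    gcongr; linarith
  · refine ((finite_Iio (n + 1)).image (atilde d)).subset fun p hp => ?_
    induction p using Itilde.induction with
    | embI x =>
      have : (1 : ℝ) / (n + 2) < 0 := hp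
      have : (0 : ℝ) < 1 / (n + 2) := by positivity
      linarith
    | atilde m =>
      have hp : (1 : ℝ) / (n + 2) < 1 / (m + 1) := hp
      rw [one_div_lt_one_div (by positivity) (by positivity)] at hp
      exact mem_image_of_mem _ (by exact_mod_cast (by linarith : (m : ℝ) < n + 1))

theorem continuous_of_tendsto_atilde [T1Space X] {Z : Type*} [TopologicalSpace Z]
    {g : Itilde d → Z} (hembI : Continuous (g ∘ embI d))
    (hatilde : ∀ x (L : Filter ℕ), Tendsto d L (𝓝 x) → L ≤ atTop →
      Tendsto (g ∘ atilde d) L (𝓝 (g (embI d x)))) :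
    Continuous g := by
  rw [continuous_iff_continuousAt]
  intro p
  induction p using Itilde.induction with
  | atilde n =>
    rw [ContinuousAt, (isOpen_singleton_iff_nhds_eq_pure _).mp (isOpen_singleton_atilde n)]
    exact tendsto_pure_nhds g _
  | embI x =>
    rw [ContinuousAt, ← nhdsWithin_univ, ← union_compl_self (range (atilde d)), ← range_embI,
      nhdsWithin_union, tendsto_sup, nhdsWithin, ← map_comap, tendsto_map'_iff,
      ← isEmbedding_embI.map_nhds_eq, tendsto_map'_iff]
    have hL := tendsto_atilde_nhds_embI_iff.mp (tendsto_comap (f := atilde d) (x := 𝓝 (embI d x)))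
    exact ⟨hatilde x _ hL.1 hL.2, hembI.tendsto x⟩

end Topological

section Map

variable {X Y : Type*} [TopologicalSpace X] [TopologicalSpace Y] {d : ℕ → X} {e : ℕ → Y}

open Classical in
noncomputable def map (f : X → Y) (τ : ℕ → ℕ) (p : Itilde d) : Itilde e :=
  if h : ∃ n, p = atilde d n then atilde e (τ h.choose) else embI e (f p.1.1)

@[simp]
theorem map_embI (f : X → Y) (τ : ℕ → ℕ) (x : X) :
    map (e := e) f τ (embI d x) = embI e (f x) :=
  dif_neg fun ⟨n, h⟩ => embI_ne_atilde x n h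

@[simp]
theorem map_atilde (f : X → Y) (τ : ℕ → ℕ) (n : ℕ) :
    map (e := e) f τ (atilde d n) = atilde e (τ n) := by
  have h : ∃ m, atilde d n = atilde d m := ⟨n, rfl⟩
  rw [map, dif_pos h, ← atilde_injective h.choose_spec]

theorem exists_homeomorph_embI (Φ : Itilde d ≃ₜ Itilde e) (τ : Equiv.Perm ℕ)
    (hΦ : ∀ n, Φ (atilde d n) = atilde e (τ n)) :
    ∃ f : X ≃ₜ Y, ∀ x, Φ (embI d x) = embI e (f x) := by
  have hatilde : range (atilde d) = Φ ⁻¹' range (atilde e) :=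
    calc range (atilde d) = Φ ⁻¹' range (Φ ∘ atilde d) := by rw [range_comp, Φ.preimage_image]
      _ = Φ ⁻¹' range (atilde e ∘ τ) := congrArg (Φ ⁻¹' range ·) (funext hΦ)
      _ = Φ ⁻¹' range (atilde e) := by rw [τ.surjective.range_comp]
  have hembI : range (embI d) = Φ ⁻¹' range (embI e) := by
    rw [range_embI, range_embI, hatilde, preimage_compl]
  refine ⟨isEmbedding_embI.toHomeomorph.trans
    ((Φ.sets hembI).trans isEmbedding_embI.toHomeomorph.symm), fun x => ?_⟩
  rw [← (isEmbedding_embI (d := e)).toHomeomorph_apply_coe, Homeomorph.trans_apply,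
    Homeomorph.trans_apply, Homeomorph.apply_symm_apply]
  simp

end Map

section Uniform

variable {X Y : Type*} [UniformSpace X] [UniformSpace Y] {d : ℕ → X} {e : ℕ → Y}

theorem continuous_map [T1Space X] {f : X → Y} (hf : Continuous f) {τ : ℕ → ℕ}
    (hτ : Tendsto τ atTop atTop) (hfτ : Tendsto (fun n => (f (d n), e (τ n))) atTop (𝓤 Y)) :
    Continuous (map (d := d) (e := e) f τ) := by
  refine continuous_of_tendsto_atilde ?_ fun x L hdL hL => ?_
  · simpa [comp_def] using isEmbedding_embI.continuous.comp hf
  · simp only [comp_def, map_atilde, map_embI]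
    refine (tendsto_atilde_nhds_embI_iff.mpr ⟨?_, hτ.mono_left hL⟩).comp tendsto_map
    exact ((hf.tendsto x).comp hdL).congr_uniformity (hfτ.mono_left hL)

@[simps apply]
noncomputable def homeomorph [T1Space X] [T1Space Y] (f : X ≃ᵤ Y) (τ : Equiv.Perm ℕ)
    (hfτ : Tendsto (fun n => (f (d n), e (τ n))) atTop (𝓤 Y)) : Itilde d ≃ₜ Itilde e where
  toFun := map f τ
  invFun := map f.symm τ.symm
  left_inv p := by induction p using Itilde.induction <;> simp
  right_inv p := by induction p using Itilde.induction <;> simp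
  continuous_toFun := continuous_map f.continuous τ.injective.nat_tendsto_atTop hfτ
  continuous_invFun := continuous_map f.symm.continuous τ.symm.injective.nat_tendsto_atTop
    (f.tendsto_uniformity_symm_perm τ hfτ)

end Uniform

end Itilde

theorem homeomorph_with_relation_iff_triple_homeomorph_general
    {X Y : Type*} [MetricSpace X] [CompactSpace X] [MetricSpace Y] [CompactSpace Y]
    {R : Set (X × X × X)} {S : Set (Y × Y × Y)}
    {d : ℕ → X} {e : ℕ → Y}
    (hd : Admissible Set.univ d) (he : Admissible Set.univ e) :
    (∃ f : X ≃ₜ Y, (fun p : X × X × X => (f p.1, f p.2.1, f p.2.2)) '' R = S) ↔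
    (∃ h : ↥(Itilde d) × ↥(Itilde d) × ↥(Itilde d) ≃ₜ
            ↥(Itilde e) × ↥(Itilde e) × ↥(Itilde e), ∃ τ : Equiv.Perm ℕ,
      h '' ((fun p : X × X × X => (embI d p.1, embI d p.2.1, embI d p.2.2)) '' R) =
        (fun p : Y × Y × Y => (embI e p.1, embI e p.2.1, embI e p.2.2)) '' S ∧
      ∀ n : ℕ,
        h '' {p | p.1 = atilde d n} = {q | q.1 = atilde e (τ n)} ∧
        h '' {p | p.2.1 = atilde d n} = {q | q.2.1 = atilde e (τ n)} ∧
        h '' {p | p.2.2 = atilde d n} = {q | q.2.2 = atilde e (τ n)}) := by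
  have hd' (x : X) : MapClusterPt x atTop d := hd.mapClusterPt (mem_univ x)
  have he' (y : Y) : MapClusterPt y atTop e := he.mapClusterPt (mem_univ y)
  have hE : Injective fun p : Y × Y × Y => (embI e p.1, embI e p.2.1, embI e p.2.2) :=
    Itilde.embI_injective.prodMap (Itilde.embI_injective.prodMap Itilde.embI_injective)
  constructor
  · rintro ⟨f, hfRS⟩
    let fᵤ : X ≃ᵤ Y :=
      { f.toEquiv with
        uniformContinuous_toFun := CompactSpace.uniformContinuous_of_continuous f.continuous
        uniformContinuous_invFun :=
          CompactSpace.uniformContinuous_of_continuous f.symm.continuous }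
    obtain ⟨τ, hτ⟩ := exists_perm_tendsto_uniformity hd' he' fᵤ
    let Φ := Itilde.homeomorph fᵤ τ hτ
    refine ⟨Φ.prodCongr (Φ.prodCongr Φ), τ, (image_image_eq_image_iff hE ?_).mpr hfRS,
      fun n => ?_⟩
    · funext p
      simp [Φ, fᵤ]
    · simpa [Φ] using Φ.image_prodCongr_cube_fibers (atilde d n)
  · rintro ⟨h, τ, hRS, hfib⟩
    have hφ := eq_diag_prod_of_mapsTo_fibers (Itilde.denseRange_atilde hd') h.continuous
      (b := atilde e ∘ τ) (fun n p hp => (hfib n).1.subset (mem_image_of_mem h hp))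
      (fun n p hp => (hfib n).2.1.subset (mem_image_of_mem h hp))
      (fun n p hp => (hfib n).2.2.subset (mem_image_of_mem h hp))
    let Φ := Homeomorph.ofCube h (fun z => (h (z, z, z)).1) hφ
    have hΦ (n : ℕ) : Φ (atilde d n) = atilde e (τ n) :=
      (hfib n).1.subset (mem_image_of_mem h (x := (atilde d n, atilde d n, atilde d n)) rfl)
    obtain ⟨f, hf⟩ := Itilde.exists_homeomorph_embI Φ τ hΦ
    refine ⟨f, (image_image_eq_image_iff hE (funext fun p => ?_)).mp hRS⟩
    rw [comp_apply, hφ]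
    simp only [comp_apply, ← hf, Φ, Homeomorph.ofCube_apply]

/-- with `X̃ = I_d(X,X)`, `Ỹ = I_e(Y,Y)` and the sets `B_n, C_n, D_n ⊆ X̃³` and
`H_m, I_m, J_m ⊆ Ỹ³` as above, there is a homeomorphism `f : X → Y` with `(f×f×f)(R) = S`
iff there are a homeomorphism `h : X̃³ → Ỹ³` and a permutation `τ` with `h(R) = S` and
`h(B_n) = H_{τ(n)}`, `h(C_n) = I_{τ(n)}`, `h(D_n) = J_{τ(n)}` for all `n`. -/
theorem homeomorph_with_relation_iff_triple_homeomorph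
    {X Y : Type*} [MetricSpace X] [CompactSpace X] [MetricSpace Y] [CompactSpace Y]
    {R : Set (X × X × X)} {S : Set (Y × Y × Y)} (hR : IsClosed R) (hS : IsClosed S)
    {d : ℕ → X} {e : ℕ → Y}
    (hd : Admissible Set.univ d) (he : Admissible Set.univ e) :
    (∃ f : X ≃ₜ Y, (fun p : X × X × X => (f p.1, f p.2.1, f p.2.2)) '' R = S) ↔
    (∃ h : ↥(Itilde d) × ↥(Itilde d) × ↥(Itilde d) ≃ₜ
            ↥(Itilde e) × ↥(Itilde e) × ↥(Itilde e), ∃ τ : Equiv.Perm ℕ,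
      h '' ((fun p : X × X × X => (embI d p.1, embI d p.2.1, embI d p.2.2)) '' R) =
        (fun p : Y × Y × Y => (embI e p.1, embI e p.2.1, embI e p.2.2)) '' S ∧
      ∀ n : ℕ,
        h '' {p | p.1 = atilde d n} = {q | q.1 = atilde e (τ n)} ∧
        h '' {p | p.2.1 = atilde d n} = {q | q.2.1 = atilde e (τ n)} ∧
        h '' {p | p.2.2 = atilde d n} = {q | q.2.2 = atilde e (τ n)}) :=
  homeomorph_with_relation_iff_triple_homeomorph_general hd he
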